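/- arXiv:2403.06983 — 2 statements merged into one kernel-verified Lean document; each statement's English description precedes it below -/
import Mathlib

section
/- Let D = diag(λ₁,…,λ_d) with λ₁ > … > λ_d > 0, let v ∈ ℝ^d have only nonzero entries, let A = D + √D v vᵀ √D and let ν₁ ≥ … ≥ ν_d denote the eigenvalues of A. For each i ∈ {1,…,d}, let j_i ∈ {i,…,d} be any index maximizing |[v]_j| over the set of j ∈ {i,…,d} satisfying λ_j ≥ λ_i · (1 − √(λ_j/λ_i) · (d−i+1) · ‖v‖_∞ · |[v]_j|) (this set is nonempty since j = i belongs to it). Then ν_i ≤ λ_i · (1 + (d−i+1) · ‖v‖_∞ · |[v]_{j_i}|) for all i ∈ {1,…,d}. -/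
open Matrix Finset

/-- The sup norm `‖v‖_∞ = max_j |[v]_j|` of a vector `v ∈ ℝ^d`, `d > 0`. -/
noncomputable def supNorm {d : ℕ} (hd : 0 < d) (v : Fin d → ℝ) : ℝ :=
  Finset.univ.sup' (Finset.univ_nonempty_iff.mpr (Fin.pos_iff_nonempty.mp hd))
    fun j => |v j|

private lemma combo_dot {d m : ℕ} (E : Fin m → Fin d → ℝ)
    (horth : ∀ k l, E k ⬝ᵥ E l = if k = l then (1:ℝ) else 0)
    (a b : Fin m → ℝ) :
    (∑ j, (∑ k, a k * E k j) * (∑ l, b l * E l j)) = ∑ k, a k * b k := by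
  have h1 : ∀ j : Fin d, (∑ k, a k * E k j) * (∑ l, b l * E l j)
      = ∑ k, ∑ l, a k * b l * (E k j * E l j) := by
    intro j
    rw [Finset.sum_mul_sum]
    exact Finset.sum_congr rfl fun k _ => Finset.sum_congr rfl fun l _ => by ring
  simp only [h1]
  rw [Finset.sum_comm]
  refine Finset.sum_congr rfl fun k _ => ?_
  rw [Finset.sum_comm]
  have h2 : ∀ l, (∑ j, a k * b l * (E k j * E l j)) = a k * b l * (E k ⬝ᵥ E l) := by
    intro l; rw [dotProduct, Finset.mul_sum]
  simp only [h2, horth, mul_ite, mul_one, mul_zero]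
  simp [Finset.sum_ite_eq]

private lemma quad_form_eq {d : ℕ}
    (lam : Fin d → ℝ) (v : Fin d → ℝ)
    (A : Matrix (Fin d) (Fin d) ℝ)
    (hA : A = Matrix.diagonal lam +
      (Matrix.diagonal fun i => Real.sqrt (lam i)) * Matrix.vecMulVec v v *
      (Matrix.diagonal fun i => Real.sqrt (lam i)))
    (u : Fin d → ℝ) :
    u ⬝ᵥ (A *ᵥ u) = (∑ j, lam j * (u j)^2)
      + (∑ j, (Real.sqrt (lam j) * v j) * u j)^2 := by
  set w : Fin d → ℝ := fun j => Real.sqrt (lam j) * v j with hw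
  have hAentry : ∀ j k, A j k = (if j = k then lam j else 0) + w j * w k := by
    intro j k
    rw [hA]
    have h2 : ((Matrix.diagonal fun i => Real.sqrt (lam i)) * Matrix.vecMulVec v v *
        (Matrix.diagonal fun i => Real.sqrt (lam i))) j k = w j * w k := by
      rw [Matrix.mul_diagonal, Matrix.diagonal_mul, Matrix.vecMulVec_apply]
      simp only [hw]; ring
    rw [Matrix.add_apply, h2, Matrix.diagonal_apply]
  have hAvu : ∀ j, (A *ᵥ u) j = lam j * u j + w j * (∑ k, w k * u k) := by
    intro j
    simp only [Matrix.mulVec, dotProduct, hAentry, add_mul, Finset.sum_add_distrib,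
      ite_mul, zero_mul]
    rw [Finset.sum_ite_eq, Finset.mul_sum]
    simp [mul_assoc]
  simp only [dotProduct, hAvu, mul_add, Finset.sum_add_distrib]
  congr 1
  · exact Finset.sum_congr rfl fun j _ => by ring
  · have h3 : ∀ x, u x * (w x * (∑ k, w k * u k)) = (w x * u x) * (∑ k, w k * u k) :=
      fun x => by ring
    simp only [h3]
    rw [← Finset.sum_mul, sq, hw]

set_option maxHeartbeats 1600000 in
/-- **Lemma 1 (eigenvalue bound after a rank-one perturbation).**
Here indices are 0-based, so the count `d - i + 1` of the paper (with 1-based `i`)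
becomes `d - i`. -/
theorem eigenvalue_bound_rank_one
    {d : ℕ} (hd : 0 < d)
    (lam : Fin d → ℝ) (hlam_strict : StrictAnti lam) (hlam_pos : ∀ i, 0 < lam i)
    (v : Fin d → ℝ) (hv : ∀ j, v j ≠ 0)
    (A : Matrix (Fin d) (Fin d) ℝ)
    (hA : A = Matrix.diagonal lam +
      (Matrix.diagonal fun i => Real.sqrt (lam i)) * Matrix.vecMulVec v v *
      (Matrix.diagonal fun i => Real.sqrt (lam i)))
    (ν : Fin d → ℝ) (hν_anti : Antitone ν)
    (e : Fin d → Fin d → ℝ)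
    (he_orth : ∀ i j, e i ⬝ᵥ e j = if i = j then (1 : ℝ) else 0)
    (he_eig : ∀ i, A.mulVec (e i) = ν i • e i)
    (ji : Fin d → Fin d)
    (hji_ge : ∀ i, i ≤ ji i)
    (hji_mem : ∀ i : Fin d, lam (ji i) ≥ lam i *
      (1 - Real.sqrt (lam (ji i) / lam i) * ((d : ℝ) - (i : ℕ)) * supNorm hd v *
        |v (ji i)|))
    (hji_max : ∀ i j : Fin d, i ≤ j →
      lam j ≥ lam i *
        (1 - Real.sqrt (lam j / lam i) * ((d : ℝ) - (i : ℕ)) * supNorm hd v * |v j|) →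
      |v j| ≤ |v (ji i)|) :
    ∀ i : Fin d,
      ν i ≤ lam i * (1 + ((d : ℝ) - (i : ℕ)) * supNorm hd v * |v (ji i)|) := by
  intro i
  have hle_sup : ∀ j, |v j| ≤ supNorm hd v := fun j =>
    Finset.le_sup' (fun j => |v j|) (Finset.mem_univ j)
  have hsup0 : (0:ℝ) ≤ supNorm hd v := (abs_nonneg _).trans (hle_sup i)
  have hKpos : (0:ℝ) < (d:ℝ) - (i:ℕ) := by
    have h := i.isLt
    have h2 : ((i:ℕ):ℝ) < (d:ℝ) := by exact_mod_cast h
    linarith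
  by_cases hcase : ν i ≤ lam i
  · have h0 : 0 ≤ lam i * (((d:ℝ) - (i:ℕ)) * supNorm hd v * |v (ji i)|) :=
      mul_nonneg (hlam_pos i).le
        (mul_nonneg (mul_nonneg hKpos.le hsup0) (abs_nonneg _))
    nlinarith
  push_neg at hcase
  -- Construct a nonzero vector u in the span of e_0,…,e_i with first i coordinates zero
  have him : i.val + 1 ≤ d := i.isLt
  have hid : i.val ≤ d := le_of_lt i.isLt
  set T : (Fin (i.val+1) → ℝ) →ₗ[ℝ] (Fin i.val → ℝ) :=
    { toFun := fun c j => ∑ k, c k * e (Fin.castLE him k) (Fin.castLE hid j)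
      map_add' := fun x y => by
        funext j; simp [add_mul, Finset.sum_add_distrib]
      map_smul' := fun a x => by
        funext j; simp [Finset.mul_sum, mul_assoc] } with hT
  obtain ⟨c, hc0, hcker⟩ : ∃ c, c ≠ 0 ∧ T c = 0 := by
    by_contra h
    push_neg at h
    have hinj : Function.Injective T := by
      rw [← LinearMap.ker_eq_bot, LinearMap.ker_eq_bot']
      intro m hm
      by_contra hm0
      exact h m hm0 hm
    have hle := LinearMap.finrank_le_finrank_of_injective hinj
    rw [Module.finrank_fin_fun, Module.finrank_fin_fun] at hle
    omega
  clear_value T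
  set u : Fin d → ℝ := fun j => ∑ k, c k * e (Fin.castLE him k) j with hu
  clear_value u
  have hu0 : ∀ j : Fin d, j < i → u j = 0 := by
    intro j hj
    have hj' : j.val < i.val := hj
    have h := congrFun hcker ⟨j.val, hj'⟩
    have hcast : Fin.castLE hid ⟨j.val, hj'⟩ = j := rfl
    simpa [hT, hu, hcast] using h
  have hee : ∀ k l : Fin (i.val+1),
      e (Fin.castLE him k) ⬝ᵥ e (Fin.castLE him l) = if k = l then (1:ℝ) else 0 := by
    intro k l
    rw [he_orth]
    simp [Fin.castLE_inj]
  -- norm of u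
  have hnorm : ∑ j, u j * u j = ∑ k, c k * c k := by
    simpa [hu] using combo_dot (fun k => e (Fin.castLE him k)) hee c c
  -- eigen-decomposition value of quadratic form
  have hAu : ∀ j, (A *ᵥ u) j = ∑ k, (c k * ν (Fin.castLE him k)) * e (Fin.castLE him k) j := by
    intro j
    have h1 : (A *ᵥ u) j = ∑ k, c k * (A *ᵥ e (Fin.castLE him k)) j := by
      simp only [Matrix.mulVec, dotProduct, hu, Finset.mul_sum]
      rw [Finset.sum_comm]
      exact Finset.sum_congr rfl fun k _ => Finset.sum_congr rfl fun m _ => by ring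
    rw [h1]
    refine Finset.sum_congr rfl fun k _ => ?_
    rw [he_eig]
    simp only [Pi.smul_apply, smul_eq_mul]
    ring
  have hQ1 : u ⬝ᵥ (A *ᵥ u) = ∑ k, c k * (c k * ν (Fin.castLE him k)) := by
    have h1 : u ⬝ᵥ (A *ᵥ u) = ∑ j, (∑ k, c k * e (Fin.castLE him k) j) *
        (∑ l, (c l * ν (Fin.castLE him l)) * e (Fin.castLE him l) j) := by
      rw [dotProduct]
      exact Finset.sum_congr rfl fun j _ => by rw [hAu, hu]
    rw [h1, combo_dot (fun k => e (Fin.castLE him k)) hee c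
      (fun l => c l * ν (Fin.castLE him l))]
  set w : Fin d → ℝ := fun j => Real.sqrt (lam j) * v j with hw
  clear_value w
  have hQ2 : u ⬝ᵥ (A *ᵥ u) = (∑ j, lam j * (u j)^2) + (∑ j, w j * u j)^2 := by
    simp only [hw]
    exact quad_form_eq lam v A hA u
  -- restrict sums to Ici i
  have hsum_eq : ∀ f : Fin d → ℝ, ∑ j, f j * u j = ∑ j ∈ Finset.Ici i, f j * u j := by
    intro f
    refine (Finset.sum_subset (Finset.subset_univ _) ?_).symm
    intro j _ hj
    rw [hu0 j (lt_of_not_ge (by simpa using hj)), mul_zero]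
  set P : ℝ := ∑ j ∈ Finset.Ici i, (u j)^2 with hP
  set L : ℝ := ∑ j ∈ Finset.Ici i, lam j * (u j)^2 with hL
  set W : ℝ := ∑ j ∈ Finset.Ici i, w j * u j with hW
  clear_value P L W
  have hPsum : ∑ k, c k * c k = P := by
    rw [← hnorm, hsum_eq u, hP]
    exact Finset.sum_congr rfl fun j _ => (sq (u j)).symm
  have hPpos : 0 < P := by
    rw [← hPsum]
    obtain ⟨k, hk⟩ := Function.ne_iff.mp hc0
    exact Finset.sum_pos' (fun k _ => mul_self_nonneg _)
      ⟨k, Finset.mem_univ k, mul_self_pos.mpr hk⟩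
  have hLsum : ∑ j, lam j * (u j)^2 = L := by
    rw [hL]
    have h1 : ∀ j, lam j * (u j)^2 = (lam j * u j) * u j := fun j => by ring
    simp only [h1]
    exact hsum_eq (fun j => lam j * u j)
  have hWsum : ∑ j, w j * u j = W := by rw [hW]; exact hsum_eq w
  -- key inequality : ν i * P ≤ L + W^2
  have hkey : ν i * P ≤ L + W^2 := by
    have h1 : ∀ k : Fin (i.val+1), ν i * (c k * c k) ≤ c k * (c k * ν (Fin.castLE him k)) := by
      intro k
      have hle : Fin.castLE him k ≤ i := by
        rw [Fin.le_def]
        simpa using Nat.lt_succ_iff.mp k.isLt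
      have := hν_anti hle
      nlinarith [mul_self_nonneg (c k)]
    calc ν i * P = ∑ k, ν i * (c k * c k) := by
          rw [← Finset.mul_sum, hPsum]
      _ ≤ ∑ k, c k * (c k * ν (Fin.castLE him k)) := Finset.sum_le_sum fun k _ => h1 k
      _ = u ⬝ᵥ (A *ᵥ u) := hQ1.symm
      _ = L + W^2 := by rw [hQ2, hLsum, hWsum]
  -- positivity of ν i - lam j on Ici i
  have hpos : ∀ j ∈ Finset.Ici i, 0 < ν i - lam j := by
    intro j hj
    have hlj : lam j ≤ lam i := hlam_strict.antitone (Finset.mem_Ici.mp hj)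
    linarith
  clear hPsum hLsum hWsum hsum_eq hQ1 hQ2 hAu hnorm hee hu0 hu hcker hc0 hT
  clear c T e he_orth he_eig hA A hv hji_ge hji_mem
  set S1 : ℝ := ∑ j ∈ Finset.Ici i, (ν i - lam j) * (u j)^2 with hS1
  clear_value S1
  have hS1pos : 0 < S1 := by
    have h1 : ∀ j ∈ Finset.Ici i, (ν i - lam i) * (u j)^2 ≤ (ν i - lam j) * (u j)^2 := by
      intro j hj
      have := hlam_strict.antitone (Finset.mem_Ici.mp hj)
      nlinarith [sq_nonneg (u j)]
    have h2 : (ν i - lam i) * P ≤ S1 := by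
      rw [hS1, hP, Finset.mul_sum]
      exact Finset.sum_le_sum h1
    linarith [mul_pos (sub_pos.mpr hcase) hPpos]
  have hS1eq : S1 = ν i * P - L := by
    rw [hS1, hP, hL, Finset.mul_sum, ← Finset.sum_sub_distrib]
    exact Finset.sum_congr rfl fun j _ => by ring
  have hS1W : S1 ≤ W^2 := by linarith
  set S2 : ℝ := ∑ j ∈ Finset.Ici i, (w j)^2 / (ν i - lam j) with hS2
  clear_value S2
  have hCS : W^2 ≤ S2 * S1 := by
    have h := Finset.sum_mul_sq_le_sq_mul_sq (Finset.Ici i)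
      (fun j => w j / Real.sqrt (ν i - lam j))
      (fun j => Real.sqrt (ν i - lam j) * u j)
    have hfg : ∀ j ∈ Finset.Ici i,
        (w j / Real.sqrt (ν i - lam j)) * (Real.sqrt (ν i - lam j) * u j) = w j * u j := by
      intro j hj
      have hx := hpos j hj
      have hs : Real.sqrt (ν i - lam j) ≠ 0 := by positivity
      field_simp
      try ring
    have hf2 : ∀ j ∈ Finset.Ici i,
        (w j / Real.sqrt (ν i - lam j))^2 = (w j)^2 / (ν i - lam j) := by
      intro j hj
      rw [div_pow, Real.sq_sqrt (hpos j hj).le]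
    have hg2 : ∀ j ∈ Finset.Ici i,
        (Real.sqrt (ν i - lam j) * u j)^2 = (ν i - lam j) * (u j)^2 := by
      intro j hj
      rw [mul_pow, Real.sq_sqrt (hpos j hj).le]
    rw [Finset.sum_congr rfl hfg, Finset.sum_congr rfl hf2, Finset.sum_congr rfl hg2] at h
    rw [hW, hS2, hS1]
    exact h
  have hS2ge1 : 1 ≤ S2 := by nlinarith
  have hcard : ((Finset.Ici i).card : ℝ) = (d:ℝ) - (i:ℕ) := by
    rw [Fin.card_Ici, Nat.cast_sub hid]
  obtain ⟨j, hjmem, hjineq⟩ : ∃ j ∈ Finset.Ici i,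
      (1:ℝ)/((d:ℝ) - (i:ℕ)) ≤ (w j)^2 / (ν i - lam j) := by
    apply Finset.exists_le_of_sum_le ⟨i, Finset.mem_Ici.mpr le_rfl⟩
    rw [Finset.sum_const, nsmul_eq_mul, hcard, mul_one_div, div_self hKpos.ne']
    rw [← hS2]
    exact hS2ge1
  have hij : i ≤ j := Finset.mem_Ici.mp hjmem
  have hx := hpos j hjmem
  have hw2 : (w j)^2 = lam j * (v j)^2 := by
    simp only [hw]
    rw [mul_pow, Real.sq_sqrt (hlam_pos j).le]
  have F1 : ν i - lam j ≤ lam j * (v j)^2 * ((d:ℝ) - (i:ℕ)) := by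
    rw [div_le_div_iff₀ hKpos hx] at hjineq
    rw [hw2] at hjineq
    linarith
  clear hjineq hw2 hx hjmem hS2ge1 hcard hCS hS1W hS1eq hS1pos hkey hpos hPpos hP hL hW hS1 hS2 hw
  clear P L W S1 S2 u w him hid hν_anti
  have hsqrt_le : Real.sqrt (lam j) ≤ Real.sqrt (lam i) :=
    Real.sqrt_le_sqrt (hlam_strict.antitone hij)
  have h2 : lam j * (v j)^2 = (Real.sqrt (lam j) * |v j|) * (Real.sqrt (lam j) * |v j|) := by
    have h3 : (Real.sqrt (lam j) * |v j|) * (Real.sqrt (lam j) * |v j|)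
        = (Real.sqrt (lam j) * Real.sqrt (lam j)) * (|v j| * |v j|) := by ring
    rw [h3, Real.mul_self_sqrt (hlam_pos j).le, abs_mul_abs_self, ← sq]
  have h1 : Real.sqrt (lam j) * |v j| ≤ Real.sqrt (lam i) * supNorm hd v :=
    mul_le_mul hsqrt_le (hle_sup j) (abs_nonneg _) (Real.sqrt_nonneg _)
  have F2 : lam j * (v j)^2 ≤
      (Real.sqrt (lam j) * Real.sqrt (lam i)) * (supNorm hd v * |v j|) := by
    rw [h2]
    calc (Real.sqrt (lam j) * |v j|) * (Real.sqrt (lam j) * |v j|)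
        ≤ (Real.sqrt (lam i) * supNorm hd v) * (Real.sqrt (lam j) * |v j|) :=
          mul_le_mul_of_nonneg_right h1 (by positivity)
      _ = _ := by ring
  have hsi : (0:ℝ) < Real.sqrt (lam i) := Real.sqrt_pos.mpr (hlam_pos i)
  have F3 : lam i * Real.sqrt (lam j / lam i) = Real.sqrt (lam j) * Real.sqrt (lam i) := by
    rw [Real.sqrt_div (hlam_pos j).le]
    field_simp
    linear_combination (-Real.sqrt (lam j)) * Real.mul_self_sqrt (hlam_pos i).le
  have F3' : lam i * Real.sqrt (lam j / lam i) *
        (((d:ℝ) - (i:ℕ)) * supNorm hd v * |v j|)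
      = Real.sqrt (lam j) * Real.sqrt (lam i) *
        (((d:ℝ) - (i:ℕ)) * supNorm hd v * |v j|) := by rw [F3]
  have F4 : Real.sqrt (lam j) * Real.sqrt (lam i) ≤ lam i := by
    have h5 := mul_le_mul_of_nonneg_right hsqrt_le (Real.sqrt_nonneg (lam i))
    rwa [Real.mul_self_sqrt (hlam_pos i).le] at h5
  have h6 := mul_le_mul_of_nonneg_right F2 hKpos.le
  have hmemj : lam j ≥ lam i *
      (1 - Real.sqrt (lam j / lam i) * ((d:ℝ) - (i:ℕ)) * supNorm hd v * |v j|) := by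
    nlinarith [F1, hcase, F3', h6]
  have hvb : |v j| ≤ |v (ji i)| := hji_max i j hij hmemj
  have h7 := mul_le_mul_of_nonneg_right F4
    (mul_nonneg (mul_nonneg hsup0 (abs_nonneg (v j))) hKpos.le)
  have h8 : lam i * (supNorm hd v * |v j| * ((d:ℝ)-(i:ℕ)))
      ≤ lam i * (supNorm hd v * |v (ji i)| * ((d:ℝ)-(i:ℕ))) := by
    have h9 : supNorm hd v * |v j| * ((d:ℝ)-(i:ℕ))
        ≤ supNorm hd v * |v (ji i)| * ((d:ℝ)-(i:ℕ)) :=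
      mul_le_mul_of_nonneg_right (mul_le_mul_of_nonneg_left hvb hsup0) hKpos.le
    exact mul_le_mul_of_nonneg_left h9 (hlam_pos i).le
  have hlj : lam j ≤ lam i := hlam_strict.antitone hij
  nlinarith [F1, h6, h7, h8, hlj]
end

section
/- Let D = diag(λ₁,…,λ_d) with λ₁ > … > λ_d > 0, let v ∈ ℝ^d have only nonzero entries, set V = max(d^{-1/2}, ‖v‖_∞), let A = D + √D v vᵀ √D with eigenvalues ν₁ ≥ … ≥ ν_d. For i ∈ {1,…,d}, let j_i ∈ {i,…,d} be any index maximizing |[v]_j| over the set of j ∈ {i,…,d} satisfying λ_j ≥ λ_i · (1 − √(λ_j/λ_i)(d−i+1)‖v‖_∞|[v]_j|). Then 0 < ν_i − λ_{j_i} ≤ 2 λ_i (d−i+1) V |[v]_{j_i}|. -/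
open Matrix Finset

theorem Matrix.diagonal_mul_vecMulVec_mul_diagonal {ι R : Type*} [Fintype ι] [DecidableEq ι]
    [CommSemiring R] (a b u v : ι → R) :
    diagonal a * vecMulVec u v * diagonal b = vecMulVec (a * u) (v * b) := by
  rw [mul_vecMulVec, vecMulVec_mul]
  congr 1 <;> funext j <;> simp [mulVec_diagonal, vecMul_diagonal]

theorem div_sub_lt_div_sub {c a μ μ' : ℝ} (hc : 0 < c) (hμ : μ < μ') (ha : a ∉ Set.Icc μ μ') :
    c / (μ' - a) < c / (μ - a) := by
  rcases lt_or_ge a μ with haμ | hμa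
  · exact div_lt_div_of_pos_left hc (by linarith) (by linarith)
  · have hμ'a : μ' < a := lt_of_not_ge fun h => ha ⟨hμa, h⟩
    have h := div_lt_div_of_pos_left hc (sub_pos.mpr hμ'a) (sub_lt_sub_left hμ a)
    rw [← neg_sub a μ', ← neg_sub a μ, div_neg, div_neg]
    exact neg_lt_neg h

-- For nonvanishing `w`, the eigenvalues of `diagonal lam + vecMulVec w w` are the solutions of
-- `secularFun lam w μ = 1`.
noncomputable def secularFun {ι : Type*} [Fintype ι] (lam w : ι → ℝ) (μ : ℝ) : ℝ :=
  ∑ j, w j ^ 2 / (μ - lam j)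

section SecularFun

variable {ι : Type*} [Fintype ι] {lam w : ι → ℝ} {μ μ' : ℝ}

theorem secularFun_neg [Nonempty ι] (hw : ∀ j, w j ≠ 0) (h : ∀ j, μ < lam j) :
    secularFun lam w μ < 0 :=
  sum_neg (fun j _ => div_neg_of_pos_of_neg (sq_pos_of_ne_zero (hw j)) (sub_neg.mpr (h j)))
    univ_nonempty

theorem secularFun_lt_secularFun [Nonempty ι] (hw : ∀ j, w j ≠ 0) (hμ : μ < μ')
    (h : ∀ j, lam j ∉ Set.Icc μ μ') : secularFun lam w μ' < secularFun lam w μ :=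
  sum_lt_sum_of_nonempty univ_nonempty fun j _ =>
    div_sub_lt_div_sub (sq_pos_of_ne_zero (hw j)) hμ (h j)

theorem le_of_secularFun_eq_one [DecidableEq ι] {t : ℝ} (hsec : secularFun lam w μ = 1)
    (s : Finset ι) (hout : ∀ j ∉ s, μ < lam j) (hin : ∀ j ∈ s, #s * w j ^ 2 ≤ t - lam j) :
    μ ≤ t := by
  by_contra! htμ
  have hin_lt : ∀ j ∈ s, w j ^ 2 / (μ - lam j) < 1 / #s := fun j hj => by
    have hs : (0 : ℝ) < #s := by exact_mod_cast card_pos.mpr ⟨j, hj⟩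
    have := hin j hj
    rw [div_lt_div_iff₀ (by nlinarith [sq_nonneg (w j)]) hs]
    linarith
  have hin_sum : ∑ j ∈ s, w j ^ 2 / (μ - lam j) < 1 := by
    rcases s.eq_empty_or_nonempty with rfl | hne
    · simp
    · calc _ < ∑ _j ∈ s, 1 / (#s : ℝ) := sum_lt_sum_of_nonempty hne hin_lt
        _ = 1 := by
          rw [sum_const, nsmul_eq_mul, mul_one_div_cancel]
          exact_mod_cast hne.card_pos.ne'
  have hout_sum : ∑ j ∈ sᶜ, w j ^ 2 / (μ - lam j) ≤ 0 := sum_nonpos fun j hj =>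
    div_nonpos_of_nonneg_of_nonpos (sq_nonneg _) (sub_nonpos.mpr (hout j (mem_compl.mp hj)).le)
  rw [secularFun, ← sum_add_sum_compl s] at hsec
  linarith

end SecularFun

section RankOneUpdate

variable {ι : Type*} [Fintype ι] [DecidableEq ι] {lam w x y : ι → ℝ} {μ : ℝ}

theorem sub_mul_apply_of_mulVec_eq_smul (hx : (diagonal lam + vecMulVec w w) *ᵥ x = μ • x)
    (j : ι) : (μ - lam j) * x j = w j * (w ⬝ᵥ x) := by
  have h := congrFun hx j
  simp only [add_mulVec, vecMulVec_mulVec, Pi.add_apply, mulVec_diagonal, Pi.smul_apply,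
    smul_eq_mul, MulOpposite.smul_eq_mul_unop, MulOpposite.unop_op] at h
  linear_combination -h

theorem dotProduct_ne_zero_of_mulVec_eq_smul (hx : (diagonal lam + vecMulVec w w) *ᵥ x = μ • x)
    (hx0 : x ≠ 0) (hw : ∀ j, w j ≠ 0) (hlam : Function.Injective lam) : w ⬝ᵥ x ≠ 0 := by
  intro hwx
  have hsupp : ∀ j, x j ≠ 0 → μ = lam j := fun j hj => by
    have := sub_mul_apply_of_mulVec_eq_smul hx j
    rw [hwx, mul_zero] at this
    exact sub_eq_zero.mp ((mul_eq_zero.mp this).resolve_right hj)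
  obtain ⟨k, hk⟩ := Function.ne_iff.mp hx0
  have hsingle : ∀ j, j ≠ k → x j = 0 := fun j hjk => by
    by_contra hj
    exact hjk (hlam ((hsupp j hj).symm.trans (hsupp k hk)))
  rw [dotProduct, sum_eq_single k (fun j _ hjk => by simp [hsingle j hjk]) (by simp)] at hwx
  exact hk ((mul_eq_zero.mp hwx).resolve_left (hw k))

theorem sub_ne_zero_of_dotProduct_ne_zero (hx : (diagonal lam + vecMulVec w w) *ᵥ x = μ • x)
    (hw : ∀ j, w j ≠ 0) (hwx : w ⬝ᵥ x ≠ 0) (j : ι) : μ - lam j ≠ 0 := by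
  intro h
  have := sub_mul_apply_of_mulVec_eq_smul hx j
  rw [h, zero_mul, eq_comm] at this
  exact mul_ne_zero (hw j) hwx this

theorem apply_eq_of_mulVec_eq_smul (hx : (diagonal lam + vecMulVec w w) *ᵥ x = μ • x)
    (hw : ∀ j, w j ≠ 0) (hwx : w ⬝ᵥ x ≠ 0) (j : ι) :
    x j = w j * (w ⬝ᵥ x) / (μ - lam j) := by
  rw [eq_div_iff (sub_ne_zero_of_dotProduct_ne_zero hx hw hwx j), mul_comm]
  exact sub_mul_apply_of_mulVec_eq_smul hx j

theorem secularFun_eq_one_of_mulVec_eq_smul (hx : (diagonal lam + vecMulVec w w) *ᵥ x = μ • x)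
    (hw : ∀ j, w j ≠ 0) (hwx : w ⬝ᵥ x ≠ 0) : secularFun lam w μ = 1 := by
  have h : w ⬝ᵥ x = secularFun lam w μ * (w ⬝ᵥ x) := by
    conv_lhs => rw [dotProduct]
    rw [secularFun, sum_mul]
    refine sum_congr rfl fun j _ => ?_
    rw [apply_eq_of_mulVec_eq_smul hx hw hwx j]
    ring
  exact (mul_eq_right₀ hwx).mp h.symm

theorem dotProduct_ne_zero_of_mulVec_eq_smul_of_mulVec_eq_smul
    (hx : (diagonal lam + vecMulVec w w) *ᵥ x = μ • x)
    (hy : (diagonal lam + vecMulVec w w) *ᵥ y = μ • y)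
    (hw : ∀ j, w j ≠ 0) (hwx : w ⬝ᵥ x ≠ 0) (hwy : w ⬝ᵥ y ≠ 0) : x ⬝ᵥ y ≠ 0 := by
  obtain ⟨j₀, -, -⟩ := exists_ne_zero_of_sum_ne_zero hwx
  have : Nonempty ι := ⟨j₀⟩
  have h : x ⬝ᵥ y = (∑ j, (w j / (μ - lam j)) ^ 2) * ((w ⬝ᵥ x) * (w ⬝ᵥ y)) := by
    rw [dotProduct, sum_mul]
    refine sum_congr rfl fun j _ => ?_
    rw [apply_eq_of_mulVec_eq_smul hx hw hwx j, apply_eq_of_mulVec_eq_smul hy hw hwy j]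
    ring
  have hpos : 0 < ∑ j, (w j / (μ - lam j)) ^ 2 :=
    sum_pos (fun j _ => sq_pos_of_ne_zero
      (div_ne_zero (hw j) (sub_ne_zero_of_dotProduct_ne_zero hx hw hwx j))) univ_nonempty
  rw [h]
  exact mul_ne_zero hpos.ne' (mul_ne_zero hwx hwy)

end RankOneUpdate

theorem lt_iff_lt_card_filter_lt {d : ℕ} {lam : Fin d → ℝ} (hlam : Antitone lam) (x : ℝ)
    (j : Fin d) : x < lam j ↔ (j : ℕ) < #{k | x < lam k} := by
  constructor
  · intro hj
    have hsub : Iic j ⊆ ({k | x < lam k} : Finset (Fin d)) := fun k hk => by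
      simpa using hj.trans_le (hlam (mem_Iic.mp hk))
    simpa using card_le_card hsub
  · intro hj
    by_contra! hxj
    have hsub : ({k | x < lam k} : Finset (Fin d)) ⊆ Iio j := fun k hk => by
      simp only [mem_filter, mem_univ, true_and] at hk
      exact mem_Iio.mpr (lt_of_not_ge fun hjk => (hk.trans_le (hlam hjk)).not_ge hxj)
    have := card_le_card hsub
    simp only [Fin.card_Iio] at this
    omega

theorem card_filter_lt_eq_of_secularFun_eq_one {d : ℕ} {lam w ν : Fin d → ℝ}
    (hw : ∀ j, w j ≠ 0) (hν : StrictAnti ν) (hroot : ∀ i, secularFun lam w (ν i) = 1)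
    (hpole : ∀ i j, ν i ≠ lam j) (i : Fin d) : #{j | ν i < lam j} = i := by
  have : Nonempty (Fin d) := ⟨i⟩
  have hlt : ∀ i, #{j | ν i < lam j} < d := fun i => by
    by_contra! hcard
    have huniv : ({j | ν i < lam j} : Finset (Fin d)) = univ :=
      eq_of_subset_of_card_le (subset_univ _) (by simpa using hcard)
    have hall : ∀ j, ν i < lam j := fun j => filter_eq_self.mp huniv j (mem_univ j)
    linarith [secularFun_neg hw hall, hroot i]
  -- Equal counts would put no pole between `ν k` and `ν i`, where the secular function decreases.
  have hmono : StrictMono fun i => (⟨#{j | ν i < lam j}, hlt i⟩ : Fin d) := by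
    intro i k hik
    have hsub : ({j | ν i < lam j} : Finset (Fin d)) ⊆ ({j | ν k < lam j} : Finset (Fin d)) :=
      monotone_filter_right _ fun j _ hj => (hν hik).trans hj
    refine Fin.mk_lt_mk.mpr ((card_le_card hsub).lt_of_ne fun hcard => ?_)
    have hset := eq_of_subset_of_card_le hsub hcard.ge
    have hgap : ∀ j, lam j ∉ Set.Icc (ν k) (ν i) := fun j ⟨hkj, hji⟩ => by
      have hj : j ∈ ({j | ν k < lam j} : Finset (Fin d)) := by
        simpa using hkj.lt_of_ne (hpole k j)
      rw [← hset, mem_filter] at hj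
      exact hj.2.not_ge hji
    linarith [secularFun_lt_secularFun hw (hν hik) hgap, hroot i, hroot k]
  exact congrArg Fin.val (congrFun hmono.eq_id i)

section GapEstimate

variable {a b c n W V β x : ℝ}

theorem sub_le_of_mul_one_sub_sqrt_le (ha : 0 < a) (hba : b ≤ a) (hnWx : 0 ≤ n * W * x)
    (h : a * (1 - √(b / a) * n * W * x) ≤ b) : a - b ≤ a * n * W * x := by
  have hs : √(b / a) ≤ 1 := Real.sqrt_le_one.mpr ((div_le_one ha).mpr hba)
  nlinarith [mul_nonneg (mul_nonneg ha.le hnWx) (sub_nonneg.mpr hs)]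

theorem mul_mul_sq_lt_sub (ha : 0 < a) (hb : 0 ≤ b) (hba : b ≤ a) (hn : 0 ≤ n) (hx : 0 ≤ x)
    (hxW : x ≤ W) (h : b < a * (1 - √(b / a) * n * W * x)) : n * (b * x ^ 2) < a - b := by
  have hsqrt : a * √(b / a) = √a * √b := by
    rw [Real.sqrt_div' _ ha.le]
    field_simp [(Real.sqrt_pos.mpr ha).ne']
    rw [Real.sq_sqrt ha.le]
    ring
  have hbx : √b * x ≤ √a * W :=
    mul_le_mul (Real.sqrt_le_sqrt hba) hxW hx (Real.sqrt_nonneg a)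
  have hsq : b * x ^ 2 ≤ √a * √b * W * x := by
    calc b * x ^ 2 = (√b * x) * (√b * x) := by rw [mul_mul_mul_comm, Real.mul_self_sqrt hb, sq]
      _ ≤ (√a * W) * (√b * x) := mul_le_mul_of_nonneg_right hbx (by positivity)
      _ = √a * √b * W * x := by ring
  calc n * (b * x ^ 2) ≤ n * (√a * √b * W * x) := mul_le_mul_of_nonneg_left hsq hn
    _ = a * √(b / a) * n * W * x := by rw [hsqrt]; ring
    _ < a - b := by linarith

theorem mul_mul_sq_le_of_admissible (ha : 0 < a) (hb : 0 ≤ b) (hba : b ≤ a) (hca : c ≤ a)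
    (hn : 0 ≤ n) (hx : 0 ≤ x) (hxW : x ≤ W) (hβ : 0 ≤ β) (hWV : W ≤ V)
    (hc : a * (1 - √(c / a) * n * W * β) ≤ c)
    (hmax : a * (1 - √(b / a) * n * W * x) ≤ b → x ≤ β) :
    n * (b * x ^ 2) ≤ c + 2 * a * n * V * β - b := by
  have hW : 0 ≤ W := hx.trans hxW
  have hanVW : a * n * W * β ≤ a * n * V * β := by gcongr
  have hcgap : a - c ≤ a * n * W * β :=
    sub_le_of_mul_one_sub_sqrt_le ha hca (by positivity) hc
  by_cases hadm : a * (1 - √(b / a) * n * W * x) ≤ b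
  · have hxβ := hmax hadm
    have : n * (b * x ^ 2) ≤ a * n * W * β := by
      calc n * (b * x ^ 2) = n * (b * (x * x)) := by ring
        _ ≤ n * (a * (β * W)) := by gcongr
        _ = a * n * W * β := by ring
    linarith
  · have := mul_mul_sq_lt_sub ha hb hba hn hx hxW (not_le.mp hadm)
    have : 0 ≤ a * n * W * β := by positivity
    linarith

end GapEstimate

/-- Indices are 0-based, so the count `d − i + 1` of the paper (1-based `i`) becomes `d − i`. -/
theorem eigenvalue_gap_bound
    {d : ℕ} (hd : 0 < d)
    (lam : Fin d → ℝ) (hlam_strict : StrictAnti lam) (hlam_pos : ∀ i, 0 < lam i)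
    (v : Fin d → ℝ) (hv : ∀ j, v j ≠ 0)
    (V : ℝ) (hV : V = max (1 / Real.sqrt d) (supNorm hd v))
    (A : Matrix (Fin d) (Fin d) ℝ)
    (hA : A = Matrix.diagonal lam +
      (Matrix.diagonal fun i => Real.sqrt (lam i)) * Matrix.vecMulVec v v *
      (Matrix.diagonal fun i => Real.sqrt (lam i)))
    (ν : Fin d → ℝ) (hν_anti : Antitone ν)
    (e : Fin d → Fin d → ℝ)
    (he_orth : ∀ i j, e i ⬝ᵥ e j = if i = j then (1 : ℝ) else 0)
    (he_eig : ∀ i, A.mulVec (e i) = ν i • e i)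
    (ji : Fin d → Fin d)
    (hji_ge : ∀ i, i ≤ ji i)
    (hji_mem : ∀ i : Fin d, lam (ji i) ≥ lam i *
      (1 - Real.sqrt (lam (ji i) / lam i) * ((d : ℝ) - (i : ℕ)) * supNorm hd v *
        |v (ji i)|))
    (hji_max : ∀ i j : Fin d, i ≤ j →
      lam j ≥ lam i *
        (1 - Real.sqrt (lam j / lam i) * ((d : ℝ) - (i : ℕ)) * supNorm hd v * |v j|) →
      |v j| ≤ |v (ji i)|) :
    ∀ i : Fin d,
      0 < ν i - lam (ji i) ∧
      ν i - lam (ji i) ≤ 2 * lam i * ((d : ℝ) - (i : ℕ)) * V * |v (ji i)| := by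
  set w : Fin d → ℝ := (fun i => √(lam i)) * v with hw_def
  have hw : ∀ j, w j ≠ 0 := fun j => mul_ne_zero (Real.sqrt_pos.mpr (hlam_pos j)).ne' (hv j)
  have heig : ∀ i, (diagonal lam + vecMulVec w w) *ᵥ e i = ν i • e i := by
    rwa [hA, diagonal_mul_vecMulVec_mul_diagonal, mul_comm v] at he_eig
  have hwe : ∀ i, w ⬝ᵥ e i ≠ 0 := fun i =>
    dotProduct_ne_zero_of_mulVec_eq_smul (heig i) (fun h => by simpa [h] using he_orth i i) hw
      hlam_strict.injective
  have hroot := fun i => secularFun_eq_one_of_mulVec_eq_smul (heig i) hw (hwe i)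
  have hpole : ∀ i j, ν i ≠ lam j := fun i j =>
    sub_ne_zero.mp (sub_ne_zero_of_dotProduct_ne_zero (heig i) hw (hwe i) j)
  have hν : StrictAnti ν := hν_anti.strictAnti_of_injective fun i k hik => by
    by_contra hne
    refine dotProduct_ne_zero_of_mulVec_eq_smul_of_mulVec_eq_smul (heig i) (hik ▸ heig k) hw
      (hwe i) (hwe k) ?_
    simpa [hne] using he_orth i k
  have hinterlace : ∀ i j, ν i < lam j ↔ j < i := fun i j => by
    rw [lt_iff_lt_card_filter_lt hlam_strict.antitone,
      card_filter_lt_eq_of_secularFun_eq_one hw hν hroot hpole, Fin.lt_def]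
  intro i
  have hlam_lt : lam i < ν i :=
    lt_of_le_of_ne (not_lt.mp ((hinterlace i i).not.mpr (lt_irrefl i))) (hpole i i).symm
  refine ⟨by linarith [hlam_strict.antitone (hji_ge i)], ?_⟩
  have hW : ∀ j, |v j| ≤ supNorm hd v := fun j => le_sup' (fun k => |v k|) (mem_univ j)
  suffices ν i ≤ lam (ji i) + 2 * lam i * ((d : ℝ) - (i : ℕ)) * V * |v (ji i)| by linarith
  refine le_of_secularFun_eq_one (hroot i) (Ici i)
    (fun j hj => (hinterlace i j).mpr (by simpa using hj)) fun j hj => ?_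
  have hij : i ≤ j := mem_Ici.mp hj
  rw [Fin.card_Ici, Nat.cast_sub i.is_lt.le, hw_def, Pi.mul_apply, mul_pow,
    Real.sq_sqrt (hlam_pos j).le, ← sq_abs (v j)]
  exact mul_mul_sq_le_of_admissible (hlam_pos i) (hlam_pos j).le (hlam_strict.antitone hij)
    (hlam_strict.antitone (hji_ge i)) (by simp [i.is_lt.le]) (abs_nonneg _) (hW j) (abs_nonneg _)
    (hV ▸ le_max_right _ _) (hji_mem i) (hji_max i j hij)
end
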